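/- arXiv:1411.7356 — 3 statements merged into one kernel-verified Lean document; each statement's English description precedes it below -/
import Mathlib

section
/- Let 1 ≤ k < d, α ∈ (0,1), s ∈ (0,1] and V ∈ G(d,k). Then there exist a constant b ≥ 1 depending only on d, a natural number m ≤ K(αs)^{1−d} with K depending only on d, and unit vectors w₁, …, w_m ∈ S^{d−1} such that X(0,V,α) ⊆ ⋃_{j=1}^m X⁺(0,w_j,αs) ⊆ ⋃_{j=1}^m X⁺(0,w_j,α) ⊆ X(0,V,bα). -/
open MeasureTheory Metric Module Set
open scoped ENNReal NNReal RealInnerProductSpace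

noncomputable section

/-- Euclidean space `ℝ^d`. -/
abbrev Euc (d : ℕ) : Type := EuclideanSpace ℝ (Fin d)

/-- Orthogonal projection onto a subspace, as a map `ℝ^d → ℝ^d`. -/
noncomputable def projCLM {d : ℕ} (V : Submodule ℝ (Euc d)) : Euc d →L[ℝ] Euc d :=
  V.subtypeL.comp (V.orthogonalProjectionOnto)

/-- `E` is `n`-Ahlfors–David regular with constants `C₁ ≤ C₂`. -/
def IsADR {d : ℕ} (n : ℕ) (C₁ C₂ : ℝ) (E : Set (Euc d)) : Prop :=
  0 < C₁ ∧ C₁ ≤ C₂ ∧ ∀ x ∈ E, ∀ r : ℝ, 0 < r → ENNReal.ofReal r ≤ EMetric.diam E →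
    ENNReal.ofReal (C₁ * r ^ n) ≤ μH[n] (E ∩ closedBall x r) ∧
      μH[n] (E ∩ closedBall x r) ≤ ENNReal.ofReal (C₂ * r ^ n)

/-- `Γ` is an `n`-dimensional Lipschitz graph with Lipschitz constant at most `M`:
`Γ = {p + A p : p ∈ P}` for an `n`-dimensional subspace `P` and `M`-Lipschitz `A : P → P^⊥`. -/
def IsLipGraph {d : ℕ} (n : ℕ) (M : ℝ≥0) (Γ : Set (Euc d)) : Prop :=
  ∃ (P : Submodule ℝ (Euc d)) (A : P → Pᗮ), finrank ℝ P = n ∧ LipschitzWith M A ∧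
    Γ = {x | ∃ p : P, x = (p : Euc d) + (A p : Euc d)}

/-- `E` has big pieces of Lipschitz graphs with constants `M` and `δ`. -/
def HasBPLG {d : ℕ} (n : ℕ) (M : ℝ≥0) (δ : ℝ) (E : Set (Euc d)) : Prop :=
  0 < δ ∧ ∀ x ∈ E, ∀ r : ℝ, 0 < r → ENNReal.ofReal r ≤ EMetric.diam E →
    ∃ Γ : Set (Euc d), IsLipGraph n M Γ ∧
      ENNReal.ofReal (δ * r ^ n) ≤ μH[n] (E ∩ Γ ∩ closedBall x r)

/-- The coordinate subspace `ℝⁿ × {0} ⊆ ℝ^d`. -/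
def coordSubspace (d n : ℕ) : Submodule ℝ (Euc d) where
  carrier := {x | ∀ i : Fin d, n ≤ (i : ℕ) → x i = 0}
  add_mem' := by
    intro a b ha hb i hi
    simp [PiLp.add_apply, ha i hi, hb i hi]
  zero_mem' := by intro i hi; rfl
  smul_mem' := by
    intro c a ha i hi
    simp [PiLp.smul_apply, ha i hi]

/-- The closed ball of radius `ρ` around `W` in the Grassmannian `G(d,n)`, realised as a set
of subspaces of `ℝ^d`, with the metric `‖V - W‖ = ‖π_V - π_W‖` (operator norm). -/
def grBall {d : ℕ} (n : ℕ) (W : Submodule ℝ (Euc d)) (ρ : ℝ) : Set (Submodule ℝ (Euc d)) :=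
  {V | finrank ℝ V = n ∧ ‖projCLM V - projCLM W‖ ≤ ρ}

/-- The Borel σ-algebra on subspaces of `ℝ^d`, induced by `V ↦ π_V`. -/
instance grassMeasurableSpace (d : ℕ) : MeasurableSpace (Submodule ℝ (Euc d)) :=
  MeasurableSpace.comap (fun V => projCLM V) (borel (Euc d →L[ℝ] Euc d))

/-- The orthogonal group `O(d)`. -/
abbrev OG (d : ℕ) := Matrix.orthogonalGroup (Fin d) ℝ

instance (d : ℕ) : MeasurableSpace (OG d) := borel _

/-- `μ` is the Haar probability measure on the orthogonal group `O(d)`: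
a left-invariant Borel probability measure. -/
def IsHaarProb {d : ℕ} (μ : Measure (OG d)) : Prop :=
  IsProbabilityMeasure μ ∧ ∀ g : OG d, Measure.map (fun h => g * h) μ = μ

/-- The measure `γ_{d,n}` on the Grassmannian: the pushforward of the Haar probability
measure `μ` on `O(d)` under the map `g ↦ g(ℝⁿ × {0})`. -/
def grassmannOf {d : ℕ} (n : ℕ) (μ : Measure (OG d)) : Measure (Submodule ℝ (Euc d)) :=
  Measure.map
    (fun g : OG d => (coordSubspace d n).map
      (Matrix.toEuclideanLin (g : Matrix (Fin d) (Fin d) ℝ))) μ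

/-- The pushforward `π_{V♯}(Hⁿ|_E)` of `Hⁿ` restricted to `E` under the orthogonal
projection onto `V`. -/
def projPush {d : ℕ} (n : ℕ) (E : Set (Euc d)) (V : Submodule ℝ (Euc d)) : Measure (Euc d) :=
  Measure.map (projCLM V) (μH[n].restrict E)

/-- `Hⁿ` on the subspace `V`. -/
def hausdorffOn {d : ℕ} (n : ℕ) (V : Submodule ℝ (Euc d)) : Measure (Euc d) :=
  μH[n].restrict (V : Set (Euc d))

/-- The squared `L²(V)`-norm of the Radon–Nikodym derivative of `π_{V♯}(Hⁿ|_E)` with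
respect to `Hⁿ` on `V`. -/
def pushL2sq {d : ℕ} (n : ℕ) (E : Set (Euc d)) (V : Submodule ℝ (Euc d)) : ℝ≥0∞ :=
  ∫⁻ z, ((projPush n E V).rnDeriv (hausdorffOn n V) z) ^ 2 ∂(hausdorffOn n V)

/-- `π_{V♯}(Hⁿ|_E) ∈ L²(V)`: the pushforward is absolutely continuous with respect to `Hⁿ`
on `V`, with square-integrable density. -/
def MemL2 {d : ℕ} (n : ℕ) (E : Set (Euc d)) (V : Submodule ℝ (Euc d)) : Prop :=
  projPush n E V ≪ hausdorffOn n V ∧ pushL2sq n E V < ∞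

/-- The (two-sided) cone `X(x, V, α) = {y : |π_{V^⊥}(x - y)| ≤ α |x - y|}`. -/
def cone {d : ℕ} (V : Submodule ℝ (Euc d)) (x : Euc d) (α : ℝ) : Set (Euc d) :=
  {y | ‖projCLM Vᗮ (x - y)‖ ≤ α * ‖x - y‖}

/-- The truncated cone `X(x, V, α, R, r)`. -/
def coneAnn {d : ℕ} (V : Submodule ℝ (Euc d)) (x : Euc d) (α R r : ℝ) : Set (Euc d) :=
  cone V x α ∩ (closedBall x R \ ball x r)

/-- The vertical cone `X(x, α) := X(x, {0} × ℝ^{d-n}, α) = {y : |π_{ℝⁿ×{0}}(x-y)| ≤ α|x-y|}`. -/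
def vertCone {d : ℕ} (n : ℕ) (x : Euc d) (α : ℝ) : Set (Euc d) :=
  {y | ‖projCLM (coordSubspace d n) (x - y)‖ ≤ α * ‖x - y‖}

/-- The truncated vertical cone `X(x, α, R, r)`. -/
def vertConeAnn {d : ℕ} (n : ℕ) (x : Euc d) (α R r : ℝ) : Set (Euc d) :=
  vertCone n x α ∩ (closedBall x R \ ball x r)

/-- `E` satisfies the `n`-dimensional `(θ, M)`-property: for every `x ∈ E` at most `M`
dyadic scales `j` have `X(x, θ, 2^{-j}, 2^{-j-1}) ∩ E ≠ ∅`. -/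
def ThetaMProp {d : ℕ} (n : ℕ) (θ : ℝ) (M : ℕ) (E : Set (Euc d)) : Prop :=
  ∀ x ∈ E,
    {j : ℤ | (vertConeAnn n x θ (2 ^ (-j)) (2 ^ (-j - 1)) ∩ E).Nonempty}.Finite ∧
    {j : ℤ | (vertConeAnn n x θ (2 ^ (-j)) (2 ^ (-j - 1)) ∩ E).Nonempty}.ncard ≤ M

/-- The one-sided cone `X⁺(x, w, α)` in direction `w`. -/
def oneSidedCone {d : ℕ} (w : Euc d) (x : Euc d) (α : ℝ) : Set (Euc d) :=
  {y | ‖projCLM (Submodule.span ℝ {w})ᗮ (x - y)‖ ≤ α * ‖x - y‖ ∧ 0 ≤ ⟪y - x, w⟫}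

/-- The truncated one-sided cone `X⁺(x, w, α, R, r)`. -/
def oneSidedConeAnn {d : ℕ} (w : Euc d) (x : Euc d) (α R r : ℝ) : Set (Euc d) :=
  oneSidedCone w x α ∩ (closedBall x R \ ball x r)

/-- Combining `x ∈ ℝⁿ` and `y ∈ ℝ^{d-n}` into a point of `ℝ^d = ℝⁿ × ℝ^{d-n}`. -/
def pairFun {d n : ℕ} (x : Euc n) (y : Euc (d - n)) : Euc d :=
  WithLp.toLp 2 fun (i : Fin d) => if h' : (i : ℕ) < n then x ⟨i, h'⟩ else y ⟨(i : ℕ) - n, by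
    have := i.isLt; omega⟩


/-!
Fix an `αs`-net of `O((αs)^{1-d})` unit vectors on the sphere (normalized grid points on the
faces of the cube `[-1, 1]^d`). A point `y` of `X(0, V, α)` lies in the one-sided cone around the
net direction `w` closest to `y / |y|`, because the distance from `y` to the line `ℝw` is at most
`|y| |w - y / |y||`. That direction is within `α + αs ≤ 2α` of `V`, as `π_{V^⊥}` is
`1`-Lipschitz; directions farther from `V` are never needed and are replaced by a unit vector of
`V`. Finally, for a unit `w`, `|π_{V^⊥} y| ≤ |π_{w^⊥} y| + |π_{V^⊥} w| |y|`, so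
`X⁺(0, w, α) ⊆ X(0, V, 3α)`.
-/

lemma exists_grid_near {N : ℕ} (hN : 0 < N) {z : ℝ} (hz : |z| ≤ 1) :
    ∃ t : Fin (N + 1), |(-1 + 2 * t / N) - z| ≤ 1 / N := by
  have hNR : (0 : ℝ) < N := by exact_mod_cast hN
  obtain ⟨hz₁, hz₂⟩ := abs_le.mp hz
  -- round `W = (z + 1) N / 2 ∈ [0, N]` to the nearest integer `t`
  set W := (z + 1) * N / 2 with hW
  have hW₀ : 0 ≤ W + 1 / 2 := by rw [hW]; nlinarith
  set t := ⌊W + 1 / 2⌋₊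
  have ht₁ : (t : ℝ) ≤ W + 1 / 2 := Nat.floor_le hW₀
  have ht₂ : W + 1 / 2 < t + 1 := Nat.lt_floor_add_one _
  have htN : t < N + 1 := by
    have : (t : ℝ) < N + 1 := by rw [hW] at ht₁; nlinarith
    exact_mod_cast this
  refine ⟨⟨t, htN⟩, ?_⟩
  have hdiff : (-1 + 2 * t / N) - z = 2 * (t - W) / N := by
    rw [hW]; field_simp; ring
  rw [Fin.val_mk, hdiff, abs_div, abs_mul, abs_two, abs_of_pos hNR]
  gcongr
  have : |(t : ℝ) - W| ≤ 1 / 2 := abs_le.mpr ⟨by linarith, by linarith⟩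
  linarith

lemma EuclideanSpace.norm_le_sqrt_card_mul {ι : Type*} [Fintype ι] {x : EuclideanSpace ℝ ι}
    {a : ℝ} (ha : 0 ≤ a) (hx : ∀ i, |x i| ≤ a) : ‖x‖ ≤ √(Fintype.card ι) * a :=
  calc ‖x‖ = √(∑ i, ‖x i‖ ^ 2) := EuclideanSpace.norm_eq x
    _ ≤ √(∑ _i : ι, a ^ 2) := by
        gcongr with i
        exact hx i
    _ = √(Fintype.card ι) * a := by
        rw [Finset.sum_const, Finset.card_univ, nsmul_eq_mul, Real.sqrt_mul (Nat.cast_nonneg _),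
          Real.sqrt_sq ha]

lemma norm_inv_norm_smul_sub_le {E : Type*} [NormedAddCommGroup E] [NormedSpace ℝ E] {x y : E}
    (hx : x ≠ 0) (hy : ‖y‖ = 1) {c : ℝ} (hc : 0 ≤ c) :
    ‖‖x‖⁻¹ • x - y‖ ≤ 2 * ‖x - c • y‖ / ‖x‖ := by
  have hx' : 0 < ‖x‖ := norm_pos_iff.mpr hx
  have hsplit : ‖x‖⁻¹ • x - y = ‖x‖⁻¹ • (x - c • y) + (‖x‖⁻¹ * (c - ‖x‖)) • y := by
    rw [smul_sub, smul_smul, mul_sub, inv_mul_cancel₀ hx'.ne', sub_smul, one_smul]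
    abel
  have hc' : |c - ‖x‖| ≤ ‖x - c • y‖ := by
    simpa [norm_smul, hy, abs_of_nonneg hc, norm_sub_rev] using abs_norm_sub_norm_le (c • y) x
  calc ‖‖x‖⁻¹ • x - y‖ ≤ ‖x‖⁻¹ * ‖x - c • y‖ + ‖x‖⁻¹ * |c - ‖x‖| := by
        rw [hsplit]
        grw [norm_add_le, norm_smul, norm_smul, norm_mul, hy, norm_inv, norm_norm,
          Real.norm_eq_abs, mul_one]
    _ ≤ 2 * ‖x - c • y‖ / ‖x‖ := by
        grw [hc']
        field_simp
        linarith

-- The point of the face `x_i = ±1` of `[-1, 1]^{n+1}` whose other coordinates are the grid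
-- values `-1 + 2t/N`.
def cubeFacePoint {n : ℕ} (N : ℕ) (ι : Fin (n + 1) × Bool × (Fin n → Fin (N + 1))) :
    Euc (n + 1) :=
  WithLp.toLp 2 (Fin.insertNth ι.1 (if ι.2.1 then 1 else -1) fun j => -1 + 2 * (ι.2.2 j : ℝ) / N)

lemma one_le_norm_cubeFacePoint {n N : ℕ} (ι : Fin (n + 1) × Bool × (Fin n → Fin (N + 1))) :
    1 ≤ ‖cubeFacePoint N ι‖ := by
  refine le_trans ?_ (PiLp.norm_apply_le (cubeFacePoint N ι) ι.1)
  obtain ⟨i, b, t⟩ := ι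
  cases b <;> simp [cubeFacePoint]

lemma exists_cubeFacePoint_near {n N : ℕ} (hN : 0 < N) {x : Euc (n + 1)}
    (hx : ∀ j, |x j| ≤ 1) {i : Fin (n + 1)} (hi : |x i| = 1) :
    ∃ ι, ‖cubeFacePoint N ι - x‖ ≤ √(n + 1) / N := by
  choose t ht using fun j => exists_grid_near hN (hx (i.succAbove j))
  refine ⟨(i, decide (0 < x i), t), ?_⟩
  have hcoord : ∀ k, |(cubeFacePoint N (i, decide (0 < x i), t) - x) k| ≤ 1 / N := by
    intro k
    rcases Fin.eq_self_or_eq_succAbove i k with rfl | ⟨j, rfl⟩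
    · rcases (abs_eq zero_le_one).mp hi with h | h <;> norm_num [cubeFacePoint, h]
    · simpa [cubeFacePoint] using ht j
  calc ‖cubeFacePoint N (i, decide (0 < x i), t) - x‖ ≤ √(Fintype.card (Fin (n + 1))) * (1 / N) :=
        EuclideanSpace.norm_le_sqrt_card_mul (by positivity) hcoord
    _ = √(n + 1) / N := by simp [div_eq_mul_inv]

lemma exists_cubeFacePoint_near_ray {n N : ℕ} (hN : 0 < N) {u : Euc (n + 1)} (hu : u ≠ 0) :
    ∃ c : ℝ, 0 < c ∧ ∃ ι, ‖cubeFacePoint N ι - c • u‖ ≤ √(n + 1) / N := by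
  obtain ⟨i, hi⟩ := Finite.exists_max fun j => |u j|
  have hui : 0 < |u i| := by
    by_contra! h
    exact hu (PiLp.ext fun j => abs_nonpos_iff.mp ((hi j).trans h))
  refine ⟨|u i|⁻¹, inv_pos.mpr hui, exists_cubeFacePoint_near hN (fun j => ?_) (i := i) ?_⟩
  · rw [PiLp.smul_apply, smul_eq_mul, abs_mul, abs_inv, abs_abs, inv_mul_le_one₀ hui]
    exact hi j
  · rw [PiLp.smul_apply, smul_eq_mul, abs_mul, abs_inv, abs_abs, inv_mul_cancel₀ hui.ne']

theorem exists_unit_net {d : ℕ} (hd : 0 < d) {e : ℝ} (he : 0 < e) (he1 : e ≤ 1) :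
    ∃ (m : ℕ) (p : Fin m → Euc d), (m : ℝ) ≤ (4 * d) ^ d * e ^ ((1 : ℤ) - d) ∧
      (∀ j, ‖p j‖ = 1) ∧ ∀ u : Euc d, ‖u‖ = 1 → ∃ j, ‖p j - u‖ ≤ e := by
  obtain ⟨n, rfl⟩ : ∃ n, d = n + 1 := ⟨d - 1, by omega⟩
  push_cast
  set N := ⌈2 * (n + 1) / e⌉₊
  have hNe : 2 * (n + 1) / e ≤ N := Nat.le_ceil _
  have hN : 0 < N := Nat.ceil_pos.mpr (by positivity)
  let I := Fin (n + 1) × Bool × (Fin n → Fin (N + 1))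
  let g : Fin (Fintype.card I) → Euc (n + 1) := cubeFacePoint N ∘ (Fintype.equivFin I).symm
  have hg : ∀ j, g j ≠ 0 := fun j =>
    norm_pos_iff.mp (one_pos.trans_le (one_le_norm_cubeFacePoint _))
  refine ⟨Fintype.card I, fun j => ‖g j‖⁻¹ • g j, ?_, fun j => norm_smul_inv_norm (hg j), ?_⟩
  · have hN' : (N + 1 : ℝ) ≤ 4 * (n + 1) * e⁻¹ := by
      have h₁ : (N : ℝ) < 2 * (n + 1) / e + 1 := Nat.ceil_lt_add_one (by positivity)
      have h₂ : 2 ≤ 2 * (n + 1) / e := by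
        rw [le_div_iff₀ he]; nlinarith [n.cast_nonneg (α := ℝ)]
      have h₃ : 4 * (n + 1) / e = 2 * (2 * (n + 1) / e) := by ring
      rw [← div_eq_mul_inv]; linarith
    have hpow : e ^ ((1 : ℤ) - (n + 1)) = e⁻¹ ^ n := by
      rw [show (1 : ℤ) - (n + 1) = -n by ring, zpow_neg, zpow_natCast, inv_pow]
    calc (Fintype.card I : ℝ) = 2 * (n + 1) * (N + 1 : ℝ) ^ n := by simp [I]; ring
      _ ≤ 4 * (n + 1) * (4 * (n + 1) * e⁻¹) ^ n := by gcongr; norm_num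
      _ = (4 * (n + 1)) ^ (n + 1) * e ^ ((1 : ℤ) - (n + 1)) := by rw [hpow, mul_pow, pow_succ]; ring
  · intro u hu
    obtain ⟨c, hc, ι, hι⟩ :=
      exists_cubeFacePoint_near_ray hN (norm_ne_zero_iff.mp (hu ▸ one_ne_zero))
    refine ⟨Fintype.equivFin I ι, ?_⟩
    have hgι : g (Fintype.equivFin I ι) = cubeFacePoint N ι := by simp [g]
    dsimp only
    rw [hgι]
    calc ‖‖cubeFacePoint N ι‖⁻¹ • cubeFacePoint N ι - u‖
        ≤ 2 * ‖cubeFacePoint N ι - c • u‖ / ‖cubeFacePoint N ι‖ :=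
          norm_inv_norm_smul_sub_le (hgι ▸ hg _) hu hc.le
      _ ≤ 2 * (√(n + 1) / N) := by
          grw [div_le_self (by positivity) (one_le_norm_cubeFacePoint ι), hι]
      _ ≤ 2 * ((n + 1) / N) := by
          gcongr
          exact Real.sqrt_le_iff.mpr ⟨by positivity, by nlinarith [n.cast_nonneg (α := ℝ)]⟩
      _ ≤ e := by
          rw [← mul_div_assoc, div_le_iff₀ (by positivity)]
          rw [div_le_iff₀ he] at hNe
          linarith

section Cones

variable {d : ℕ}

lemma projCLM_eq_starProjection (U : Submodule ℝ (Euc d)) : projCLM U = U.starProjection := rfl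

lemma norm_projCLM_le (U : Submodule ℝ (Euc d)) (v : Euc d) : ‖projCLM U v‖ ≤ ‖v‖ :=
  U.norm_starProjection_apply_le v

lemma projCLM_orthogonal_apply_eq_zero {U : Submodule ℝ (Euc d)} {z : Euc d} (hz : z ∈ U) :
    projCLM Uᗮ z = 0 :=
  Submodule.starProjection_orthogonal_apply_eq_zero hz

lemma norm_projCLM_orthogonal_le_norm_sub {U : Submodule ℝ (Euc d)} {z : Euc d} (hz : z ∈ U)
    (v : Euc d) : ‖projCLM Uᗮ v‖ ≤ ‖v - z‖ := by
  simpa [map_sub, projCLM_orthogonal_apply_eq_zero hz] using norm_projCLM_le Uᗮ (v - z)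

lemma norm_projCLM_orthogonal_le_of_norm_eq_one (V : Submodule ℝ (Euc d)) {w : Euc d}
    (hw : ‖w‖ = 1) (v : Euc d) :
    ‖projCLM Vᗮ v‖ ≤ ‖projCLM (ℝ ∙ w)ᗮ v‖ + ‖projCLM Vᗮ w‖ * ‖v‖ := by
  have hsplit : v = projCLM (ℝ ∙ w)ᗮ v + ⟪w, v⟫ • w := by
    rw [projCLM_eq_starProjection, Submodule.starProjection_orthogonal_val,
      Submodule.starProjection_unit_singleton ℝ hw, sub_add_cancel]
  have hinner : |⟪w, v⟫| ≤ ‖v‖ := by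
    simpa [hw] using abs_real_inner_le_norm w v
  calc ‖projCLM Vᗮ v‖
      = ‖projCLM Vᗮ (projCLM (ℝ ∙ w)ᗮ v) + ⟪w, v⟫ • projCLM Vᗮ w‖ := by
        conv_lhs => rw [hsplit]
        rw [map_add, map_smul]
    _ ≤ ‖projCLM (ℝ ∙ w)ᗮ v‖ + |⟪w, v⟫| * ‖projCLM Vᗮ w‖ := by
        grw [norm_add_le, norm_projCLM_le, norm_smul, Real.norm_eq_abs]
    _ ≤ ‖projCLM (ℝ ∙ w)ᗮ v‖ + ‖projCLM Vᗮ w‖ * ‖v‖ := by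
        rw [mul_comm]; gcongr

lemma mem_cone_zero {V : Submodule ℝ (Euc d)} {α : ℝ} {y : Euc d} :
    y ∈ cone V 0 α ↔ ‖projCLM Vᗮ y‖ ≤ α * ‖y‖ := by
  simp [cone]

lemma mem_oneSidedCone_zero {w y : Euc d} {β : ℝ} :
    y ∈ oneSidedCone w 0 β ↔ ‖projCLM (ℝ ∙ w)ᗮ y‖ ≤ β * ‖y‖ ∧ 0 ≤ ⟪y, w⟫ := by
  simp [oneSidedCone]

lemma cone_mono {V : Submodule ℝ (Euc d)} {x : Euc d} {β γ : ℝ} (h : β ≤ γ) :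
    cone V x β ⊆ cone V x γ :=
  fun _ hy => hy.trans (mul_le_mul_of_nonneg_right h (norm_nonneg _))

lemma oneSidedCone_mono {w x : Euc d} {β γ : ℝ} (h : β ≤ γ) :
    oneSidedCone w x β ⊆ oneSidedCone w x γ :=
  fun _ ⟨hy, hpos⟩ => ⟨hy.trans (mul_le_mul_of_nonneg_right h (norm_nonneg _)), hpos⟩

lemma oneSidedCone_subset_cone (V : Submodule ℝ (Euc d)) {w : Euc d} (hw : ‖w‖ = 1)
    (x : Euc d) (α : ℝ) : oneSidedCone w x α ⊆ cone V x (α + ‖projCLM Vᗮ w‖) := fun y ⟨hy, _⟩ =>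
  calc ‖projCLM Vᗮ (x - y)‖
      ≤ ‖projCLM (ℝ ∙ w)ᗮ (x - y)‖ + ‖projCLM Vᗮ w‖ * ‖x - y‖ :=
        norm_projCLM_orthogonal_le_of_norm_eq_one V hw _
    _ ≤ (α + ‖projCLM Vᗮ w‖) * ‖x - y‖ := by linarith

lemma smul_mem_oneSidedCone_zero {w u : Euc d} {e t : ℝ} (hw : ‖w‖ = 1) (hu : ‖u‖ = 1)
    (hwu : ‖w - u‖ ≤ e) (he : e ≤ 1) (ht : 0 ≤ t) : t • u ∈ oneSidedCone w 0 e := by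
  rw [mem_oneSidedCone_zero]
  constructor
  · calc ‖projCLM (ℝ ∙ w)ᗮ (t • u)‖ ≤ ‖t • u - t • w‖ :=
          norm_projCLM_orthogonal_le_norm_sub
            (Submodule.smul_mem _ t (Submodule.mem_span_singleton_self w)) _
      _ = ‖w - u‖ * ‖t • u‖ := by
          rw [← smul_sub, norm_smul, norm_smul, hu, norm_sub_rev, Real.norm_of_nonneg ht]; ring
      _ ≤ e * ‖t • u‖ := by gcongr
  · -- `2 ⟪u, w⟫ = 2 - ‖w - u‖² ≥ 1`
    have h := norm_sub_sq_real w u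
    rw [hw, hu, real_inner_comm] at h
    rw [real_inner_smul_left]
    apply mul_nonneg ht
    nlinarith [norm_nonneg (w - u)]

lemma exists_norm_eq_one_mem {V : Submodule ℝ (Euc d)} (hV : V ≠ ⊥) : ∃ w ∈ V, ‖w‖ = 1 := by
  obtain ⟨v, hvV, hv⟩ := Submodule.exists_mem_ne_zero_of_ne_bot hV
  exact ⟨‖v‖⁻¹ • v, V.smul_mem _ hvV, norm_smul_inv_norm hv⟩

lemma exists_eq_norm_smul_mem_cone_zero {V : Submodule ℝ (Euc d)} (hV : V ≠ ⊥) {α : ℝ}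
    (hα : 0 ≤ α) {y : Euc d} (hy : y ∈ cone V 0 α) :
    ∃ u ∈ cone V 0 α, ‖u‖ = 1 ∧ y = ‖y‖ • u := by
  rcases eq_or_ne y 0 with rfl | hy0
  · obtain ⟨w, hwV, hw⟩ := exists_norm_eq_one_mem hV
    refine ⟨w, ?_, hw, by simp⟩
    rw [mem_cone_zero, projCLM_orthogonal_apply_eq_zero hwV, norm_zero]
    positivity
  · refine ⟨‖y‖⁻¹ • y, ?_, norm_smul_inv_norm hy0, ?_⟩
    · rw [mem_cone_zero] at hy ⊢
      rw [map_smul, norm_smul, norm_smul]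
      exact mul_le_mul_of_nonneg_left hy (norm_nonneg _) |>.trans_eq (by ring)
    · rw [smul_smul, mul_inv_cancel₀ (norm_ne_zero_iff.mpr hy0), one_smul]

lemma exists_directions_cover_cone {V : Submodule ℝ (Euc d)} (hV : V ≠ ⊥) {α e : ℝ}
    (hα : 0 ≤ α) (he : e ≤ 1) {m : ℕ} {p : Fin m → Euc d} (hp : ∀ j, ‖p j‖ = 1)
    (hnet : ∀ u : Euc d, ‖u‖ = 1 → ∃ j, ‖p j - u‖ ≤ e) :
    ∃ w : Fin m → Euc d, (∀ j, ‖w j‖ = 1) ∧ (∀ j, ‖projCLM Vᗮ (w j)‖ ≤ α + e) ∧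
      cone V 0 α ⊆ ⋃ j, oneSidedCone (w j) 0 e := by
  obtain ⟨w₀, hw₀V, hw₀⟩ := exists_norm_eq_one_mem hV
  have he0 : 0 ≤ e := by
    obtain ⟨j, hj⟩ := hnet w₀ hw₀
    exact (norm_nonneg _).trans hj
  refine ⟨fun j => if ‖projCLM Vᗮ (p j)‖ ≤ α + e then p j else w₀, fun j => ?_, fun j => ?_, ?_⟩
  · dsimp only
    split_ifs
    exacts [hp j, hw₀]
  · dsimp only
    split_ifs with h
    · exact h
    · rw [projCLM_orthogonal_apply_eq_zero hw₀V, norm_zero]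
      positivity
  · intro y hy
    obtain ⟨u, hu, hu1, hyu⟩ := exists_eq_norm_smul_mem_cone_zero hV hα hy
    obtain ⟨j, hj⟩ := hnet u hu1
    have hclose : ‖projCLM Vᗮ (p j)‖ ≤ α + e :=
      calc ‖projCLM Vᗮ (p j)‖ ≤ ‖projCLM Vᗮ u‖ + ‖projCLM Vᗮ (p j - u)‖ := by
            rw [map_sub]; exact norm_le_insert' _ _
        _ ≤ α * ‖u‖ + ‖p j - u‖ := add_le_add (mem_cone_zero.mp hu) (norm_projCLM_le _ _)
        _ ≤ α + e := by rw [hu1, mul_one]; linarith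
    refine mem_iUnion.mpr ⟨j, ?_⟩
    simp only [if_pos hclose]
    rw [hyu]
    exact smul_mem_oneSidedCone_zero (hp j) hu1 hj he (norm_nonneg _)

end Cones

theorem stmt7_general (d : ℕ) :
    ∃ b K : ℝ, 1 ≤ b ∧ 0 < K ∧
      ∀ (k : ℕ) (α s : ℝ) (V : Submodule ℝ (Euc d)),
        1 ≤ k → k < d → 0 < α → α < 1 → 0 < s → s ≤ 1 → finrank ℝ V = k →
        ∃ (m : ℕ) (w : Fin m → Euc d),
          (m : ℝ) ≤ K * (α * s) ^ ((1 : ℤ) - d) ∧ (∀ j, ‖w j‖ = 1) ∧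
          cone V 0 α ⊆ (⋃ j, oneSidedCone (w j) 0 (α * s)) ∧
          (⋃ j, oneSidedCone (w j) 0 (α * s)) ⊆ (⋃ j, oneSidedCone (w j) 0 α) ∧
          (⋃ j, oneSidedCone (w j) 0 α) ⊆ cone V 0 (b * α) := by
  refine ⟨3, (4 * d) ^ d, by norm_num, by cases d <;> positivity, ?_⟩
  intro k α s V hk hkd hα hα1 hs hs1 hV
  have hαs : α * s ≤ α := mul_le_of_le_one_right hα.le hs1
  have hV0 : V ≠ ⊥ := by
    rintro rfl
    rw [finrank_bot] at hV
    omega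
  obtain ⟨m, p, hm, hp, hnet⟩ := exists_unit_net (by omega : 0 < d) (mul_pos hα hs) (by linarith)
  obtain ⟨w, hw, hwV, hcover⟩ := exists_directions_cover_cone hV0 hα.le (by linarith) hp hnet
  refine ⟨m, w, hm, hw, hcover, iUnion_mono fun j => oneSidedCone_mono hαs,
    iUnion_subset fun j => (oneSidedCone_subset_cone V (hw j) 0 α).trans (cone_mono ?_)⟩
  linarith [hwV j]

/-- the covering lemma for cones. A cone of aperture `α` around a `k`-plane can
be covered by boundedly many one-sided one-dimensional cones of aperture `αs`, which in turn
lie in the cone of aperture `bα`. -/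
theorem stmt7 (d : ℕ) (hd : 1 ≤ d) :
    ∃ b K : ℝ, 1 ≤ b ∧ 0 < K ∧
      ∀ (k : ℕ) (α s : ℝ) (V : Submodule ℝ (Euc d)),
        1 ≤ k → k < d → 0 < α → α < 1 → 0 < s → s ≤ 1 → finrank ℝ V = k →
        ∃ (m : ℕ) (w : Fin m → Euc d),
          (m : ℝ) ≤ K * (α * s) ^ ((1 : ℤ) - d) ∧ (∀ j, ‖w j‖ = 1) ∧
          cone V 0 α ⊆ (⋃ j, oneSidedCone (w j) 0 (α * s)) ∧
          (⋃ j, oneSidedCone (w j) 0 (α * s)) ⊆ (⋃ j, oneSidedCone (w j) 0 α) ∧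
          (⋃ j, oneSidedCone (w j) 0 α) ⊆ cone V 0 (b * α) :=
  stmt7_general d

end
end

section
/- Let 1 ≤ n < d, V ∈ G(d,n), δ > 0, and let F ⊂ ℝ^d be a finite set. Define f_V : V → ℝ by f_V(z) = Σ_{x∈F} 1_{B(π_V x, δ)}(z), where B(π_V x, δ) is the closed ball in V. Then ∫_V f_V(z)² dHⁿ(z) ≥ 2^{−n}·ωₙ·δⁿ · #{(x,y) ∈ F × F : |π_V(x−y)| ≤ δ}, where ωₙ is the Hⁿ-measure of the unit ball of an n-dimensional subspace. -/
open MeasureTheory Metric Module Set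
open scoped ENNReal NNReal RealInnerProductSpace

noncomputable section

/-!
Expanding the square, `∫ f_V² = Σ_{x, y ∈ F} Hⁿ(B(π_V x, δ) ∩ B(π_V y, δ) ∩ V)`. When
`|π_V x - π_V y| ≤ δ`, both balls contain the ball of radius `δ / 2` in `V` around the midpoint of
`π_V x` and `π_V y`, whose measure is `(δ / 2)ⁿ ωₙ` because `Hⁿ` is translation invariant, scales
by `rⁿ` under dilations, and `V` is isometric to `ℝⁿ`.
-/

theorem closedBall_midpoint_subset_inter {E : Type*} [NormedAddCommGroup E] [NormedSpace ℝ E]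
    {a b : E} {δ : ℝ} (h : dist a b ≤ δ) :
    closedBall (midpoint ℝ a b) (δ / 2) ⊆ closedBall a δ ∩ closedBall b δ := by
  intro z hz
  have hz : dist z (midpoint ℝ a b) ≤ δ / 2 := hz
  have ha : dist (midpoint ℝ a b) a = dist a b / 2 := by
    rw [dist_midpoint_left]; norm_num; ring
  have hb : dist (midpoint ℝ a b) b = dist a b / 2 := by
    rw [dist_midpoint_right, dist_comm]; norm_num; ring
  constructor
  · exact (dist_triangle z _ a).trans (by linarith)
  · exact (dist_triangle z _ b).trans (by linarith)

section HausdorffBalls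

variable {E : Type*} [NormedAddCommGroup E] [MeasurableSpace E] [BorelSpace E]

open scoped Pointwise in
theorem hausdorffMeasure_closedBall [NormedSpace ℝ E] (n : ℕ) (x : E) {r : ℝ} (hr : 0 < r) :
    μH[n] (closedBall x r) = ENNReal.ofReal (r ^ n) * μH[n] (closedBall (0 : E) 1) := by
  have hball : closedBall x r = IsometryEquiv.addLeft x '' (r • closedBall (0 : E) 1) := by
    rw [_root_.smul_closedBall _ _ zero_le_one, IsometryEquiv.image_closedBall]
    simp [abs_of_pos hr]
  rw [hball, IsometryEquiv.hausdorffMeasure_image,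
    Measure.hausdorffMeasure_smul₀ n.cast_nonneg hr.ne', ENNReal.smul_def, smul_eq_mul,
    Real.nnnorm_of_nonneg hr.le, NNReal.rpow_natCast, ENNReal.ofReal, Real.toNNReal_pow hr.le,
    Real.toNNReal_of_nonneg hr.le]

theorem hausdorffMeasure_closedBall_inter_submodule [InnerProductSpace ℝ E] {n : ℕ}
    (V : Submodule ℝ E) [FiniteDimensional ℝ V] (hV : finrank ℝ V = n) {c : E} (hc : c ∈ V)
    {r : ℝ} (hr : 0 < r) :
    μH[n] (closedBall c r ∩ V) =
      ENNReal.ofReal (r ^ n) * μH[n] (closedBall (0 : EuclideanSpace ℝ (Fin n)) 1) := by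
  subst hV
  let e := (stdOrthonormalBasis ℝ V).repr.toIsometryEquiv
  have himg : ((↑) : V → E) '' closedBall ⟨c, hc⟩ r = closedBall c r ∩ V :=
    Subtype.image_closedBall _ _
  rw [← himg, isometry_subtype_coe.hausdorffMeasure_image (Or.inl (Nat.cast_nonneg _)),
    hausdorffMeasure_closedBall _ _ hr, ← e.hausdorffMeasure_image, e.image_closedBall]
  simp [e]

end HausdorffBalls

theorem sq_sum_indicator_one {α ι : Type*} (s : Finset ι) (S : ι → Set α) (z : α) :
    (∑ i ∈ s, (S i).indicator (fun _ => (1 : ℝ≥0∞)) z) ^ 2 =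
      ∑ i ∈ s, ∑ j ∈ s, (S i ∩ S j).indicator (fun _ => (1 : ℝ≥0∞)) z := by
  rw [sq, Finset.sum_mul_sum]
  refine Finset.sum_congr rfl fun i _ => Finset.sum_congr rfl fun j _ => ?_
  rw [← inter_indicator_mul, one_mul]

theorem lintegral_sq_sum_indicator_one {α ι : Type*} [MeasurableSpace α] (μ : Measure α)
    (s : Finset ι) {S : ι → Set α} (hS : ∀ i, MeasurableSet (S i)) :
    ∫⁻ z, (∑ i ∈ s, (S i).indicator (fun _ => (1 : ℝ≥0∞)) z) ^ 2 ∂μ =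
      ∑ i ∈ s, ∑ j ∈ s, μ (S i ∩ S j) := by
  have hmeas : ∀ i j, Measurable ((S i ∩ S j).indicator fun _ => (1 : ℝ≥0∞)) :=
    fun i j => measurable_const.indicator ((hS i).inter (hS j))
  simp_rw [sq_sum_indicator_one]
  rw [lintegral_finsetSum _ fun i _ => Finset.measurable_sum _ fun j _ => hmeas i j]
  refine Finset.sum_congr rfl fun i _ => ?_
  rw [lintegral_finsetSum _ fun j _ => hmeas i j]
  exact Finset.sum_congr rfl fun j _ => lintegral_indicator_one ((hS i).inter (hS j))

theorem hausdorffMeasure_closedBall_inter_closedBall_inter_submodule {E : Type*}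
    [NormedAddCommGroup E] [InnerProductSpace ℝ E] [MeasurableSpace E] [BorelSpace E] {n : ℕ}
    (V : Submodule ℝ E) [FiniteDimensional ℝ V] (hV : finrank ℝ V = n) {a b : E} (ha : a ∈ V)
    (hb : b ∈ V) {δ : ℝ} (hδ : 0 < δ) (hab : dist a b ≤ δ) :
    ENNReal.ofReal (δ ^ n) * μH[n] (closedBall (0 : EuclideanSpace ℝ (Fin n)) 1) / 2 ^ n ≤
      μH[n] ((closedBall a δ ∩ V) ∩ (closedBall b δ ∩ V)) := by
  have hm : midpoint ℝ a b ∈ V := by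
    rw [midpoint_eq_smul_add]; exact V.smul_mem _ (V.add_mem ha hb)
  have hsub :
      closedBall (midpoint ℝ a b) (δ / 2) ∩ V ⊆ (closedBall a δ ∩ V) ∩ (closedBall b δ ∩ V) :=
    fun z ⟨hz, hzV⟩ => ⟨⟨(closedBall_midpoint_subset_inter hab hz).1, hzV⟩,
      ⟨(closedBall_midpoint_subset_inter hab hz).2, hzV⟩⟩
  calc ENNReal.ofReal (δ ^ n) * μH[n] (closedBall (0 : EuclideanSpace ℝ (Fin n)) 1) / 2 ^ n
      = ENNReal.ofReal ((δ / 2) ^ n) * μH[n] (closedBall (0 : EuclideanSpace ℝ (Fin n)) 1) := by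
        rw [div_pow, ENNReal.ofReal_div_of_pos (by positivity), ENNReal.ofReal_pow zero_le_two,
          ENNReal.ofReal_ofNat, ENNReal.div_eq_inv_mul, ENNReal.div_eq_inv_mul, mul_assoc]
    _ = μH[n] (closedBall (midpoint ℝ a b) (δ / 2) ∩ V) :=
        (hausdorffMeasure_closedBall_inter_submodule V hV hm (half_pos hδ)).symm
    _ ≤ _ := measure_mono hsub

theorem stmt14_general (n d : ℕ) (V : Submodule ℝ (Euc d))
    (hV : finrank ℝ V = n) (δ : ℝ) (hδ : 0 < δ) (F : Finset (Euc d)) :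
    ENNReal.ofReal (δ ^ n) * μH[n] (closedBall (0 : Euc n) 1) / 2 ^ n *
        ({p : Euc d × Euc d | p.1 ∈ F ∧ p.2 ∈ F ∧ ‖projCLM V (p.1 - p.2)‖ ≤ δ}.ncard) ≤
      ∫⁻ z, (∑ x ∈ F, (closedBall (projCLM V x) δ ∩ (V : Set (Euc d))).indicator
          (fun _ => (1 : ℝ≥0∞)) z) ^ 2 ∂(hausdorffOn n V) := by
  set S : Euc d → Set (Euc d) := fun x => closedBall (projCLM V x) δ ∩ V
  set G := (F ×ˢ F).filter fun p => ‖projCLM V (p.1 - p.2)‖ ≤ δ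
  have hS : ∀ x, MeasurableSet (S x) :=
    fun x => measurableSet_closedBall.inter V.closed_of_finiteDimensional.measurableSet
  have hG : {p : Euc d × Euc d | p.1 ∈ F ∧ p.2 ∈ F ∧ ‖projCLM V (p.1 - p.2)‖ ≤ δ} = G := by
    ext p; simp [G, and_assoc]
  have hpair : ∀ p ∈ G, ENNReal.ofReal (δ ^ n) * μH[n] (closedBall (0 : Euc n) 1) / 2 ^ n ≤
      hausdorffOn n V (S p.1 ∩ S p.2) := fun p hp => by
    rw [hausdorffOn, Measure.restrict_apply ((hS _).inter (hS _))]
    refine (hausdorffMeasure_closedBall_inter_closedBall_inter_submodule V hV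
      (V.coe_mem _) (V.coe_mem _) hδ ?_).trans (measure_mono fun z hz => ⟨hz, hz.1.2⟩)
    simpa [dist_eq_norm, projCLM] using (Finset.mem_filter.1 hp).2
  rw [lintegral_sq_sum_indicator_one _ _ hS, hG, ncard_coe_finset, mul_comm, ← nsmul_eq_mul,
    ← Finset.sum_product']
  exact (G.card_nsmul_le_sum _ _ hpair).trans
    (Finset.sum_le_sum_of_subset (Finset.filter_subset _ _))

/-- the `L²`-norm of `f_V = Σ_{x ∈ F} 1_{B(π_V x, δ)}` controls from above the
number of pairs of points of `F` whose projections to `V` are `δ`-close. -/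
theorem stmt14 (n d : ℕ) (hn : 1 ≤ n) (hnd : n < d) (V : Submodule ℝ (Euc d))
    (hV : finrank ℝ V = n) (δ : ℝ) (hδ : 0 < δ) (F : Finset (Euc d)) :
    ENNReal.ofReal (δ ^ n) * μH[n] (closedBall (0 : Euc n) 1) / 2 ^ n *
        ({p : Euc d × Euc d | p.1 ∈ F ∧ p.2 ∈ F ∧ ‖projCLM V (p.1 - p.2)‖ ≤ δ}.ncard) ≤
      ∫⁻ z, (∑ x ∈ F, (closedBall (projCLM V x) δ ∩ (V : Set (Euc d))).indicator
          (fun _ => (1 : ℝ≥0∞)) z) ^ 2 ∂(hausdorffOn n V) :=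
  stmt14_general n d V hV δ hδ F
end
end

section
/- Let 1 ≤ n < d and υ > 0. There exists α₀ > 0, depending only on n and υ, with the following property: for every W ∈ G(d,n) and every z ∈ ℝ^d \ {0} with |π_W z| ≤ α₀|z|, there exists V₀ ∈ G(d,n) such that π_{V₀} z = 0 and ‖π_{V₀} − π_W‖ ≤ υ/2. -/
/-!
Let `p = π_W z` and, if `p ≠ 0`, `e = p / |p|`. Then `W = ℝe ⊕ K` with `K = W ∩ e^⊥`, and `z ⊥ K`
because `z - p ⊥ W`. Replace `e` by the normalisation `e'` of the component of `e` orthogonal to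
`z`: the plane `V₀ = ℝe' ⊕ K` annihilates `z`, and `π_{V₀} - π_W = π_{ℝe'} - π_{ℝe}` has norm at
most `2|e' - e| ≤ 4|π_{ℝz} e| ≤ 4|p|/|z|`. Hence `α₀ = min (υ/8) (1/2)` works, in every dimension.
-/

open MeasureTheory Metric Module Set
open scoped ENNReal NNReal RealInnerProductSpace

noncomputable section

theorem norm_inv_norm_smul_sub_le_s16 {F : Type*} [NormedAddCommGroup F] [NormedSpace ℝ F]
    {e : F} (he : ‖e‖ = 1) (v : F) : ‖‖v‖⁻¹ • v - e‖ ≤ 2 * ‖v - e‖ := by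
  rcases eq_or_ne v 0 with rfl | hv
  · simp [he]
  have hnormalize : ‖‖v‖⁻¹ • v - v‖ ≤ ‖v - e‖ :=
    calc ‖‖v‖⁻¹ • v - v‖ = |(‖v‖⁻¹ - 1) * ‖v‖| := by
          rw [abs_mul, abs_norm, ← Real.norm_eq_abs, ← norm_smul, sub_smul, one_smul]
      _ = |‖e‖ - ‖v‖| := by rw [sub_mul, inv_mul_cancel₀ (norm_ne_zero_iff.2 hv), one_mul, he]
      _ ≤ ‖v - e‖ := by rw [norm_sub_rev]; exact abs_norm_sub_norm_le e v
  calc ‖‖v‖⁻¹ • v - e‖ ≤ ‖‖v‖⁻¹ • v - v‖ + ‖v - e‖ := norm_sub_le_norm_sub_add_norm_sub _ _ _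
    _ ≤ 2 * ‖v - e‖ := by linarith

open scoped InnerProductSpace

namespace Submodule

variable {𝕜 E : Type*} [RCLike 𝕜] [NormedAddCommGroup E] [InnerProductSpace 𝕜 E]

theorem IsOrtho.starProjection_sup {U V : Submodule 𝕜 E} (h : U ⟂ V)
    [U.HasOrthogonalProjection] [V.HasOrthogonalProjection] [(U ⊔ V).HasOrthogonalProjection] :
    (U ⊔ V).starProjection = U.starProjection + V.starProjection := by
  ext x
  refine eq_starProjection_of_mem_of_inner_eq_zero
    (add_mem_sup (starProjection_apply_mem U x) (starProjection_apply_mem V x)) ?_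
  intro w hw
  obtain ⟨u, hu, v, hv, rfl⟩ := mem_sup.1 hw
  have hUu : ⟪x - U.starProjection x, u⟫_𝕜 = 0 := starProjection_inner_eq_zero x u hu
  have hVv : ⟪x - V.starProjection x, v⟫_𝕜 = 0 := starProjection_inner_eq_zero x v hv
  have hVu : ⟪V.starProjection x, u⟫_𝕜 = 0 := h.symm.inner_eq (starProjection_apply_mem V x) hu
  have hUv : ⟪U.starProjection x, v⟫_𝕜 = 0 := h.inner_eq (starProjection_apply_mem U x) hv
  rw [add_apply, inner_add_right]
  simp only [inner_sub_left, inner_add_left] at hUu hVv ⊢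
  linear_combination hUu + hVv - hVu - hUv

theorem finrank_span_singleton_sup [FiniteDimensional 𝕜 E] {K : Submodule 𝕜 E} {e : E}
    (he : e ≠ 0) (heK : e ∈ Kᗮ) : finrank 𝕜 ↥((𝕜 ∙ e) ⊔ K) = finrank 𝕜 K + 1 := by
  have hinf : (𝕜 ∙ e) ⊓ K = ⊥ :=
    eq_bot_iff.2 fun x hx ↦ (orthogonal_disjoint K).le_bot
      ⟨hx.2, (span_singleton_le_iff_mem e Kᗮ).2 heK hx.1⟩
  have := finrank_sup_add_finrank_inf_eq (𝕜 ∙ e) K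
  rw [hinf, finrank_bot, finrank_span_singleton he] at this
  omega

theorem norm_starProjection_span_unit_sub_le {a b : E} (ha : ‖a‖ = 1) (hb : ‖b‖ = 1) :
    ‖(𝕜 ∙ a).starProjection - (𝕜 ∙ b).starProjection‖ ≤ 2 * ‖a - b‖ := by
  refine ContinuousLinearMap.opNorm_le_bound _ (by positivity) fun x ↦ ?_
  rw [sub_apply, starProjection_unit_singleton 𝕜 ha, starProjection_unit_singleton 𝕜 hb]
  calc ‖⟪a, x⟫_𝕜 • a - ⟪b, x⟫_𝕜 • b‖ = ‖⟪a - b, x⟫_𝕜 • a + ⟪b, x⟫_𝕜 • (a - b)‖ := by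
        rw [inner_sub_left, sub_smul, smul_sub, sub_add_sub_cancel]
    _ ≤ ‖a - b‖ * ‖x‖ * ‖a‖ + ‖b‖ * ‖x‖ * ‖a - b‖ := by
        refine (norm_add_le _ _).trans (add_le_add ?_ ?_) <;> rw [norm_smul] <;> gcongr <;>
          exact norm_inner_le_norm _ _
    _ = 2 * ‖a - b‖ * ‖x‖ := by rw [ha, hb]; ring

theorem norm_starProjection_span_mul_norm_le {W : Submodule 𝕜 E} [W.HasOrthogonalProjection]
    {e : E} (he : e ∈ W) (z : E) :
    ‖(𝕜 ∙ z).starProjection e‖ * ‖z‖ ≤ ‖W.starProjection z‖ * ‖e‖ := by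
  rcases eq_or_ne z 0 with rfl | hz
  · simp
  have hz' : 0 < ‖z‖ := norm_pos_iff.2 hz
  have hinner : ⟪z, e⟫_𝕜 = ⟪W.starProjection z, e⟫_𝕜 := by
    rw [inner_starProjection_left_eq_right, starProjection_eq_self_iff.mpr he]
  have key := congrArg norm (smul_starProjection_singleton 𝕜 (v := z) e)
  rw [norm_smul, norm_smul, RCLike.norm_ofReal, abs_of_nonneg (by positivity)] at key
  refine le_of_mul_le_mul_left ?_ hz'
  calc ‖z‖ * (‖(𝕜 ∙ z).starProjection e‖ * ‖z‖) = ‖⟪z, e⟫_𝕜‖ * ‖z‖ := by rw [← key]; ring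
    _ ≤ ‖W.starProjection z‖ * ‖e‖ * ‖z‖ := by
        gcongr; exact hinner ▸ norm_inner_le_norm _ _
    _ = ‖z‖ * (‖W.starProjection z‖ * ‖e‖) := by ring

end Submodule

open Submodule

variable {E : Type*} [NormedAddCommGroup E] [InnerProductSpace ℝ E] [FiniteDimensional ℝ E]

theorem exists_starProjection_apply_eq_zero_near_span_singleton_sup {K : Submodule ℝ E}
    {e z : E} (he : ‖e‖ = 1) (heK : e ∈ Kᗮ) (hzK : z ∈ Kᗮ)
    (hez : ‖(ℝ ∙ z).starProjection e‖ < 1) :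
    ∃ V : Submodule ℝ E, finrank ℝ V = finrank ℝ ↥((ℝ ∙ e) ⊔ K) ∧ V.starProjection z = 0 ∧
      ‖V.starProjection - ((ℝ ∙ e) ⊔ K).starProjection‖ ≤
        4 * ‖(ℝ ∙ z).starProjection e‖ := by
  set v := (ℝ ∙ z)ᗮ.starProjection e
  have hproj : (ℝ ∙ z).starProjection e = e - v :=
    eq_sub_of_add_eq ((ℝ ∙ z).starProjection_add_starProjection_orthogonal e)
  have hve : ‖v - e‖ = ‖(ℝ ∙ z).starProjection e‖ := by rw [hproj, norm_sub_rev]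
  have hv : v ≠ 0 := by
    rintro hv
    rw [hv, zero_sub, norm_neg, he] at hve
    exact hez.ne' hve
  set e' := ‖v‖⁻¹ • v
  have he' : ‖e'‖ = 1 := norm_smul_inv_norm hv
  have he'K : e' ∈ Kᗮ := by
    refine Kᗮ.smul_mem _ ?_
    rw [show v = e - (ℝ ∙ z).starProjection e by rw [hproj, sub_sub_cancel]]
    exact Kᗮ.sub_mem heK ((span_singleton_le_iff_mem z Kᗮ).2 hzK (starProjection_apply_mem _ e))
  have he'z : e' ∈ (ℝ ∙ z)ᗮ := (ℝ ∙ z)ᗮ.smul_mem _ (starProjection_apply_mem _ e)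
  have hsup {a : E} (ha : a ∈ Kᗮ) :
      ((ℝ ∙ a) ⊔ K).starProjection = (ℝ ∙ a).starProjection + K.starProjection :=
    IsOrtho.starProjection_sup (isOrtho_iff_le.2 ((span_singleton_le_iff_mem a Kᗮ).2 ha))
  refine ⟨(ℝ ∙ e') ⊔ K, ?_, ?_, ?_⟩
  · rw [finrank_span_singleton_sup (norm_ne_zero_iff.1 (he'.trans_ne one_ne_zero)) he'K,
      finrank_span_singleton_sup (norm_ne_zero_iff.1 (he.trans_ne one_ne_zero)) heK]
  · rw [hsup he'K, add_apply, (starProjection_apply_eq_zero_iff K).2 hzK, add_zero,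
      starProjection_apply_eq_zero_iff, mem_orthogonal_singleton_iff_inner_left]
    exact mem_orthogonal_singleton_iff_inner_right.1 he'z
  · rw [hsup he'K, hsup heK, add_sub_add_right_eq_sub, ← hve]
    calc _ ≤ 2 * ‖e' - e‖ := norm_starProjection_span_unit_sub_le he' he
      _ ≤ 2 * (2 * ‖v - e‖) := by gcongr; exact norm_inv_norm_smul_sub_le_s16 he v
      _ = 4 * ‖v - e‖ := by ring

theorem exists_starProjection_apply_eq_zero_near (W : Submodule ℝ E) {z : E} (hz : z ≠ 0)
    {α : ℝ} (hα : α < 1) (hWz : ‖W.starProjection z‖ ≤ α * ‖z‖) :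
    ∃ V : Submodule ℝ E, finrank ℝ V = finrank ℝ W ∧ V.starProjection z = 0 ∧
      ‖V.starProjection - W.starProjection‖ ≤ 4 * α := by
  have hz' : 0 < ‖z‖ := norm_pos_iff.2 hz
  set p := W.starProjection z
  rcases eq_or_ne p 0 with hp | hp
  · have hα0 : 0 ≤ α := nonneg_of_mul_nonneg_left (hWz.trans' (norm_nonneg p)) hz'
    exact ⟨W, rfl, hp, by rw [sub_self, norm_zero]; positivity⟩
  set e := ‖p‖⁻¹ • p
  have he : ‖e‖ = 1 := norm_smul_inv_norm hp
  have heW : e ∈ W := W.smul_mem _ (starProjection_apply_mem W z)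
  set K := (ℝ ∙ e)ᗮ ⊓ W
  have hW : (ℝ ∙ e) ⊔ K = W :=
    sup_orthogonal_inf_of_hasOrthogonalProjection ((span_singleton_le_iff_mem e W).2 heW)
  have heK : e ∈ Kᗮ :=
    (mem_orthogonal K e).2 fun k hk ↦ mem_orthogonal_singleton_iff_inner_left.1 hk.1
  have hpe : p = ‖p‖ • e := (smul_inv_smul₀ (norm_ne_zero_iff.2 hp) p).symm
  have hzK : z ∈ Kᗮ := (mem_orthogonal K z).2 fun k hk ↦ by
    rw [← starProjection_eq_self_iff.2 hk.2, inner_starProjection_left_eq_right]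
    change ⟪k, p⟫ = 0
    rw [hpe, inner_smul_right, mem_orthogonal_singleton_iff_inner_left.1 hk.1, mul_zero]
  have hez : ‖(ℝ ∙ z).starProjection e‖ ≤ α := by
    refine le_of_mul_le_mul_right ?_ hz'
    calc _ ≤ ‖p‖ * ‖e‖ := norm_starProjection_span_mul_norm_le heW z
      _ ≤ α * ‖z‖ := by rwa [he, mul_one]
  rw [← hW]
  obtain ⟨V, hVrank, hVz, hVW⟩ :=
    exists_starProjection_apply_eq_zero_near_span_singleton_sup he heK hzK (hez.trans_lt hα)
  exact ⟨V, hVrank, hVz, hVW.trans (by gcongr)⟩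

theorem stmt16_general (n : ℕ) (υ : ℝ) (hυ : 0 < υ) :
    ∃ α₀ : ℝ, 0 < α₀ ∧
      ∀ d : ℕ, n < d → ∀ W : Submodule ℝ (Euc d), finrank ℝ W = n →
        ∀ z : Euc d, z ≠ 0 → ‖projCLM W z‖ ≤ α₀ * ‖z‖ →
          ∃ V₀ : Submodule ℝ (Euc d), finrank ℝ V₀ = n ∧ projCLM V₀ z = 0 ∧
            ‖projCLM V₀ - projCLM W‖ ≤ υ / 2 := by
  refine ⟨min (υ / 8) (1 / 2), by positivity, fun d _ W hW z hz hWz ↦ ?_⟩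
  obtain ⟨V, hVrank, hVz, hVW⟩ := exists_starProjection_apply_eq_zero_near W hz
    ((min_le_right _ _).trans_lt (by norm_num)) hWz
  refine ⟨V, hVrank.trans hW, hVz, hVW.trans ?_⟩
  linarith [min_le_left (υ / 8) (1 / 2)]

/-- if `z` is almost orthogonal to `W ∈ G(d,n)`, there is a plane
`V₀ ∈ G(d,n)` annihilating `z` with `‖π_{V₀} - π_W‖ ≤ υ/2`; the threshold `α₀` depends
only on `n` and `υ`. -/
theorem stmt16 (n : ℕ) (υ : ℝ) (hn : 1 ≤ n) (hυ : 0 < υ) :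
    ∃ α₀ : ℝ, 0 < α₀ ∧
      ∀ d : ℕ, n < d → ∀ W : Submodule ℝ (Euc d), finrank ℝ W = n →
        ∀ z : Euc d, z ≠ 0 → ‖projCLM W z‖ ≤ α₀ * ‖z‖ →
          ∃ V₀ : Submodule ℝ (Euc d), finrank ℝ V₀ = n ∧ projCLM V₀ z = 0 ∧
            ‖projCLM V₀ - projCLM W‖ ≤ υ / 2 :=
  stmt16_general n υ hυ

end
end
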